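/- Let 1 ≤ p < q ≤ 2 be reals and n ≥ 2, let J_n ∈ ℝ^{n×n} be the all-ones matrix, and set A = I + n^{1/q−1}·J_n. Then for every ε with n^{−(1/p − 1/q)} < ε < 1/2: the identity matrix I satisfies ‖A − I‖_{S_p} < 2ε‖A‖_{S_p} and nnz(I) = n, while every Ã ∈ ℝ^{n×n} with ‖A − Ã‖_{S_q} ≤ 0.1‖A‖_{S_q} satisfies nnz(Ã) ≥ 0.96·n² − n. -/

import Mathlib

open scoped BigOperators ENNReal
open Matrix

/-- Number of nonzero entries of a vector. -/
noncomputable def nnzv {n : ℕ} (x : Fin n → ℝ) : ℕ :=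
  (Finset.univ.filter fun i => x i ≠ 0).card

/-- The ℓ_p norm of a vector, for a real exponent `p`. -/
noncomputable def lpNorm {n : ℕ} (p : ℝ) (x : Fin n → ℝ) : ℝ :=
  (∑ i, |x i| ^ p) ^ (1 / p)

/-- `IsHead x c y` : `y` is obtained from `x` by keeping (at most) `c` entries that are
largest in absolute value (exactly `min c n` of them, ties broken arbitrarily) and zeroing out the rest. -/
def IsHead {n : ℕ} (x : Fin n → ℝ) (c : ℕ) (y : Fin n → ℝ) : Prop :=
  ∃ T : Finset (Fin n), T.card = min c n ∧ (∀ i ∈ T, y i = x i) ∧ (∀ i ∉ T, y i = 0) ∧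
    ∀ i ∈ T, ∀ j ∉ T, |x j| ≤ |x i|

/-- The singular values of a real matrix: square roots of the eigenvalues of `Aᵀ * A`. -/
noncomputable def singVals {m n : Type*} [Fintype m] [Fintype n] [DecidableEq n]
    (A : Matrix m n ℝ) : n → ℝ :=
  fun j => Real.sqrt ((Matrix.isHermitian_conjTranspose_mul_self A).eigenvalues j)

/-- The Schatten p-(quasi)norm of a real matrix, for a real exponent `p > 0`. -/
noncomputable def schattenF {m n : Type*} [Fintype m] [Fintype n] [DecidableEq n]
    (p : ℝ) (A : Matrix m n ℝ) : ℝ :=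
  (∑ j, singVals A j ^ p) ^ (1 / p)

/-- The spectral norm (Schatten ∞-norm): the largest singular value. -/
noncomputable def specNorm {m n : Type*} [Fintype m] [Fintype n] [DecidableEq n]
    (A : Matrix m n ℝ) : ℝ :=
  ⨆ j, singVals A j

open Classical in
/-- The Schatten p-norm with exponent `p ∈ (0,∞]`. -/
noncomputable def schattenE {m n : Type*} [Fintype m] [Fintype n] [DecidableEq n]
    (p : ℝ≥0∞) (A : Matrix m n ℝ) : ℝ :=
  if p = ⊤ then specNorm A else schattenF p.toReal A

/-- Number of nonzero entries of a matrix. -/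
noncomputable def nnz {m n : Type*} [Fintype m] [Fintype n] (A : Matrix m n ℝ) : ℕ :=
  (Finset.univ.filter fun ij : m × n => A ij.1 ij.2 ≠ 0).card


/-!
`A - 1 = c • J` with `c = n ^ (1/q - 1)` has the single nonzero singular value `c n = n ^ (1/q)`,
whereas the singular values of `A` are `1 + n ^ (1/q)` once and `1` otherwise. Hence
`‖A - 1‖_p = n ^ (1/q) < ε n ^ (1/p) ≤ ε ‖A‖_p`, and, by convexity of `t ↦ t ^ q`,
`‖A‖_q ≤ 2 n ^ (1/q)`. Each off-diagonal zero of `Ã` contributes `c ^ 2` to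
`‖A - Ã‖_F ^ 2 ≤ ‖A - Ã‖_q ^ 2 ≤ 0.04 n ^ (2/q) = 0.04 c ^ 2 n ^ 2` (as `q ≤ 2`), so `Ã` has at most
`0.04 n ^ 2` off-diagonal zeros.
-/

lemma Finset.sum_rpow_le_rpow_sum {ι : Type*} (s : Finset ι) {f : ι → ℝ} (hf : ∀ i, 0 ≤ f i)
    {r : ℝ} (hr : 1 ≤ r) : ∑ i ∈ s, f i ^ r ≤ (∑ i ∈ s, f i) ^ r := by
  classical
  induction s using Finset.induction with
  | empty => simp [Real.zero_rpow (by linarith : r ≠ 0)]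
  | insert a s ha ih =>
    rw [Finset.sum_insert ha, Finset.sum_insert ha]
    calc f a ^ r + ∑ i ∈ s, f i ^ r ≤ f a ^ r + (∑ i ∈ s, f i) ^ r := by linarith
      _ ≤ (f a + ∑ i ∈ s, f i) ^ r :=
        Real.add_rpow_le_rpow_add (hf a) (Finset.sum_nonneg fun i _ => hf i) hr

section AllOnes

variable {ι : Type*} [Fintype ι] [DecidableEq ι] {J : Matrix ι ι ℝ}

lemma mulVec_smul_one_add_smul_allOnes (hJ : ∀ i j, J i j = 1) (a b : ℝ) (v : ι → ℝ) (i : ι) :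
    ((a • 1 + b • J) *ᵥ v) i = a * v i + b * ∑ k, v k := by
  simp [mulVec, dotProduct, hJ, add_mul, Finset.sum_add_distrib, one_apply, Finset.mul_sum]

lemma Matrix.IsHermitian.eigenvalues_eq_or_of_eq_smul_one_add_smul (hJ : ∀ i j, J i j = 1)
    {a b : ℝ} {M : Matrix ι ι ℝ} (hM : M.IsHermitian) (hMeq : M = a • 1 + b • J) (j : ι) :
    hM.eigenvalues j = a ∨ hM.eigenvalues j = a + b * Fintype.card ι := by
  set v : ι → ℝ := ⇑(hM.eigenvectorBasis j)
  have hv : v ≠ 0 := fun h =>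
    hM.eigenvectorBasis.orthonormal.ne_zero j (by ext k; exact congrFun h k)
  have hcoord : ∀ i, (hM.eigenvalues j - a) * v i = b * ∑ k, v k := fun i => by
    have heig := congrFun (hM.mulVec_eigenvectorBasis j) i
    have hMv := mulVec_smul_one_add_smul_allOnes hJ a b v i
    rw [← hMeq] at hMv
    simp only [Pi.smul_apply, smul_eq_mul] at heig
    linarith
  by_cases hs : ∑ k, v k = 0
  · left
    obtain ⟨i, hi⟩ := Function.ne_iff.mp hv
    have := hcoord i
    rw [hs, mul_zero] at this
    exact sub_eq_zero.mp ((mul_eq_zero.mp this).resolve_right hi)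
  · right
    have hsum : (hM.eigenvalues j - a) * ∑ k, v k = b * Fintype.card ι * ∑ k, v k := by
      rw [Finset.mul_sum, Finset.sum_congr rfl fun i _ => hcoord i]
      simp only [Finset.sum_const, Finset.card_univ, nsmul_eq_mul]
      ring
    linarith [mul_right_cancel₀ hs hsum]

lemma Matrix.IsHermitian.exists_eigenvalues_of_eq_smul_one_add_smul [Nonempty ι]
    (hJ : ∀ i j, J i j = 1) {a b : ℝ} {M : Matrix ι ι ℝ} (hM : M.IsHermitian)
    (hMeq : M = a • 1 + b • J) :
    ∃ j₀, hM.eigenvalues j₀ = a + b * Fintype.card ι ∧ ∀ j ≠ j₀, hM.eigenvalues j = a := by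
  have hdich := hM.eigenvalues_eq_or_of_eq_smul_one_add_smul hJ hMeq
  set n : ℝ := (Fintype.card ι : ℝ)
  by_cases hb : b = 0
  · obtain j₀ := Classical.arbitrary ι
    have hall : ∀ j, hM.eigenvalues j = a := fun j => by simpa [hb] using hdich j
    exact ⟨j₀, by simp [hall, hb], fun j _ => hall j⟩
  set S := Finset.univ.filter fun j => hM.eigenvalues j = a + b * n
  -- the trace `n a + n b` also equals `n a + #S b n`, forcing `#S = 1`
  have htrace : ∑ j, hM.eigenvalues j = n * a + n * b := by
    have := hM.trace_eq_sum_eigenvalues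
    simp only [RCLike.ofReal_real_eq_id, id] at this
    rw [← this, hMeq]
    simp [trace, hJ, n]
  have hsplit : ∑ j, hM.eigenvalues j = n * a + S.card * (b * n) := by
    have : ∀ j, hM.eigenvalues j = a + if j ∈ S then b * n else 0 := fun j => by
      rcases hdich j with h | h <;> simp [S, h, hb, n]
    rw [Finset.sum_congr rfl fun j _ => this j, Finset.sum_add_distrib, Finset.sum_ite_mem,
      Finset.univ_inter, Finset.sum_const, Finset.sum_const, nsmul_eq_mul, nsmul_eq_mul]
    simp [n]
  have hcard : S.card = 1 := by
    have hbn : b * n ≠ 0 := mul_ne_zero hb (by positivity)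
    have : (S.card : ℝ) * (b * n) = 1 * (b * n) := by linarith
    exact_mod_cast mul_right_cancel₀ hbn this
  obtain ⟨j₀, hS⟩ := Finset.card_eq_one.mp hcard
  have hmem : ∀ j, j ∈ S ↔ j = j₀ := fun j => by rw [hS, Finset.mem_singleton]
  refine ⟨j₀, by simpa [S] using (hmem j₀).mpr rfl, fun j hj => ?_⟩
  exact (hdich j).resolve_right fun h => hj ((hmem j).mp (by simpa [S] using h))

lemma conjTranspose_mul_self_smul_one_add_smul (hJ : ∀ i j, J i j = 1) (x y : ℝ) :
    (x • 1 + y • J)ᴴ * (x • 1 + y • J) =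
      (x ^ 2) • (1 : Matrix ι ι ℝ) + (2 * x * y + y ^ 2 * Fintype.card ι) • J := by
  ext i k
  by_cases hik : i = k <;>
    simp [mul_apply, one_apply, hJ, hik, add_mul, mul_add, Finset.sum_add_distrib] <;> ring

lemma exists_singVals_smul_one_add_smul [Nonempty ι] (hJ : ∀ i j, J i j = 1) {x y : ℝ}
    (hx : 0 ≤ x) (hy : 0 ≤ y) :
    ∃ j₀, singVals (x • 1 + y • J) j₀ = x + y * Fintype.card ι ∧
      ∀ j ≠ j₀, singVals (x • 1 + y • J) j = x := by
  obtain ⟨j₀, hj₀, hj⟩ :=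
    (isHermitian_conjTranspose_mul_self _).exists_eigenvalues_of_eq_smul_one_add_smul hJ
      (conjTranspose_mul_self_smul_one_add_smul hJ x y)
  refine ⟨j₀, ?_, fun j hne => ?_⟩
  · rw [singVals, hj₀, show x ^ 2 + (2 * x * y + y ^ 2 * Fintype.card ι) * Fintype.card ι =
      (x + y * Fintype.card ι) ^ 2 by ring, Real.sqrt_sq (by positivity)]
  · rw [singVals, hj j hne, Real.sqrt_sq hx]

lemma sum_singVals_rpow_smul_one_add_smul [Nonempty ι] (hJ : ∀ i j, J i j = 1) {x y : ℝ}
    (hx : 0 ≤ x) (hy : 0 ≤ y) (r : ℝ) :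
    ∑ j, singVals (x • 1 + y • J) j ^ r =
      (x + y * Fintype.card ι) ^ r + (Fintype.card ι - 1) * x ^ r := by
  obtain ⟨j₀, hj₀, hj⟩ := exists_singVals_smul_one_add_smul hJ hx hy
  rw [← Finset.add_sum_erase _ _ (Finset.mem_univ j₀), hj₀,
    Finset.sum_congr rfl fun j hj' => by rw [hj j (Finset.ne_of_mem_erase hj')],
    Finset.sum_const, Finset.card_erase_of_mem (Finset.mem_univ j₀), nsmul_eq_mul,
    Finset.card_univ, Nat.cast_pred Fintype.card_pos]

lemma schattenF_smul_allOnes [Nonempty ι] (hJ : ∀ i j, J i j = 1) {p : ℝ} (hp : p ≠ 0)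
    {y : ℝ} (hy : 0 ≤ y) : schattenF p (y • J) = y * Fintype.card ι := by
  have hsum := sum_singVals_rpow_smul_one_add_smul hJ le_rfl hy p
  rw [zero_smul, zero_add, zero_add, Real.zero_rpow hp, mul_zero, add_zero] at hsum
  rw [schattenF, hsum, ← Real.rpow_mul (by positivity), mul_one_div_cancel hp, Real.rpow_one]

lemma card_rpow_le_schattenF_one_add_smul [Nonempty ι] (hJ : ∀ i j, J i j = 1) {p : ℝ}
    (hp : 0 < p) {y : ℝ} (hy : 0 ≤ y) :
    (Fintype.card ι : ℝ) ^ (1 / p) ≤ schattenF p (1 + y • J) := by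
  have hsum := sum_singVals_rpow_smul_one_add_smul hJ zero_le_one hy p
  rw [one_smul, Real.one_rpow, mul_one] at hsum
  rw [schattenF, hsum]
  have : (1 : ℝ) ≤ (1 + y * Fintype.card ι) ^ p :=
    Real.one_le_rpow (le_add_of_nonneg_right (by positivity)) hp.le
  exact Real.rpow_le_rpow (by positivity) (by linarith) (by positivity)

lemma schattenF_one_add_smul_le [Nonempty ι] (hJ : ∀ i j, J i j = 1) {q : ℝ} (hq : 1 ≤ q)
    {y : ℝ} (hy : 0 ≤ y) (hdom : (Fintype.card ι : ℝ) ≤ (y * Fintype.card ι) ^ q) :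
    schattenF q (1 + y • J) ≤ 2 * (y * Fintype.card ι) := by
  set n : ℝ := (Fintype.card ι : ℝ)
  set t := y * n
  have hn : 1 ≤ n := Nat.one_le_cast.mpr Fintype.card_pos
  have ht : 0 ≤ t := by positivity
  have hsum := sum_singVals_rpow_smul_one_add_smul hJ zero_le_one hy q
  rw [one_smul, Real.one_rpow, mul_one] at hsum
  have hconv : (1 + t) ^ q ≤ 2 ^ (q - 1) * (1 + t ^ q) := by
    have := NNReal.coe_le_coe.mpr (NNReal.rpow_add_le_mul_rpow_add_rpow 1 t.toNNReal hq)
    push_cast [NNReal.coe_rpow, Real.coe_toNNReal _ ht] at this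
    simpa using this
  have h2q : (2 : ℝ) ^ q = 2 ^ (q - 1) * 2 := by
    rw [← Real.rpow_add_one two_ne_zero, sub_add_cancel]
  have h21 : (1 : ℝ) ≤ 2 ^ (q - 1) := Real.one_le_rpow one_le_two (by linarith)
  have hbound : (1 + t) ^ q + (n - 1) ≤ (2 * t) ^ q := by
    rw [Real.mul_rpow zero_le_two ht, h2q]
    nlinarith
  rw [schattenF, hsum]
  calc ((1 + t) ^ q + (n - 1)) ^ (1 / q) ≤ ((2 * t) ^ q) ^ (1 / q) :=
        Real.rpow_le_rpow (by linarith [Real.rpow_nonneg (by linarith : (0:ℝ) ≤ 1 + t) q]) hbound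
          (by positivity)
    _ = 2 * t := by
        rw [← Real.rpow_mul (by positivity), mul_one_div_cancel (by linarith), Real.rpow_one]

end AllOnes


section Schatten

variable {m n : Type*} [Fintype m] [Fintype n] [DecidableEq n]

lemma singVals_nonneg (M : Matrix m n ℝ) (j : n) : 0 ≤ singVals M j := Real.sqrt_nonneg _

lemma schattenF_nonneg (p : ℝ) (M : Matrix m n ℝ) : 0 ≤ schattenF p M :=
  Real.rpow_nonneg (Finset.sum_nonneg fun j _ => Real.rpow_nonneg (singVals_nonneg M j) p) _

lemma sum_singVals_sq (M : Matrix m n ℝ) : ∑ j, singVals M j ^ 2 = ∑ i, ∑ j, M i j ^ 2 := by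
  have hM := isHermitian_conjTranspose_mul_self M
  have hsq : ∀ j, singVals M j ^ 2 = hM.eigenvalues j := fun j =>
    Real.sq_sqrt ((posSemidef_conjTranspose_mul_self M).eigenvalues_nonneg j)
  have htrace := hM.trace_eq_sum_eigenvalues
  simp only [RCLike.ofReal_real_eq_id, id] at htrace
  rw [Finset.sum_congr rfl fun j _ => hsq j, ← htrace, Finset.sum_comm]
  simp [trace, mul_apply, sq]

lemma sum_sq_le_schattenF_sq {q : ℝ} (hq : 0 < q) (hq2 : q ≤ 2) (M : Matrix m n ℝ) :
    ∑ i, ∑ j, M i j ^ 2 ≤ schattenF q M ^ 2 := by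
  have hσ : ∀ j, singVals M j ^ 2 = (singVals M j ^ q) ^ (2 / q) := fun j => by
    rw [← Real.rpow_mul (singVals_nonneg M j), mul_div_cancel₀ _ hq.ne', Real.rpow_two]
  rw [← sum_singVals_sq, Finset.sum_congr rfl fun j _ => hσ j, schattenF, ← Real.rpow_two,
    ← Real.rpow_mul (Finset.sum_nonneg fun j _ => Real.rpow_nonneg (singVals_nonneg M j) q),
    one_div_mul_eq_div]
  exact Finset.univ.sum_rpow_le_rpow_sum (fun j => Real.rpow_nonneg (singVals_nonneg M j) q)
    ((one_le_div hq).mpr hq2)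

end Schatten

section Sparsity

variable {ι : Type*} [Fintype ι]

lemma nnz_one [DecidableEq ι] : nnz (1 : Matrix ι ι ℝ) = Fintype.card ι := by
  have hsupp : (Finset.univ.filter fun ij : ι × ι => (1 : Matrix ι ι ℝ) ij.1 ij.2 ≠ 0) =
      Finset.univ.diag := by
    ext ⟨i, j⟩
    by_cases h : i = j <;> simp [one_apply, h]
  rw [nnz, hsupp, Finset.diag_card, Finset.card_univ]

lemma card_offDiag_sub_nnz_mul_sq_le {A : Matrix ι ι ℝ} {c : ℝ}
    (hA : ∀ i j, i ≠ j → A i j = c) (At : Matrix ι ι ℝ) :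
    ((Fintype.card ι : ℝ) ^ 2 - Fintype.card ι - nnz At) * c ^ 2 ≤
      ∑ i, ∑ j, (A - At) i j ^ 2 := by
  set Z := (Finset.univ : Finset ι).offDiag.filter fun ij => At ij.1 ij.2 = 0
  have hZ : (Fintype.card ι : ℝ) ^ 2 - Fintype.card ι - nnz At ≤ Z.card := by
    have hsplit : Z.card + ((Finset.univ : Finset ι).offDiag.filter
        fun ij => ¬At ij.1 ij.2 = 0).card = (Finset.univ : Finset ι).offDiag.card :=
      Finset.card_filter_add_card_filter_not _
    have hnz : ((Finset.univ : Finset ι).offDiag.filter fun ij => ¬At ij.1 ij.2 = 0).card ≤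
        nnz At :=
      Finset.card_le_card fun ij hij => by simpa [nnz] using (Finset.mem_filter.mp hij).2
    have hoff :
        ((Finset.univ : Finset ι).offDiag.card : ℝ) = Fintype.card ι ^ 2 - Fintype.card ι := by
      rw [Finset.offDiag_card, Finset.card_univ,
        Nat.cast_sub (Nat.le_mul_self _), Nat.cast_mul, sq]
    have hle : (Finset.univ : Finset ι).offDiag.card ≤ Z.card + nnz At := by omega
    have := (Nat.cast_le (α := ℝ)).mpr hle
    push_cast at this
    linarith
  have hZsum : (Z.card : ℝ) * c ^ 2 ≤ ∑ i, ∑ j, (A - At) i j ^ 2 := by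
    have hentry : ∀ ij ∈ Z, (A - At) ij.1 ij.2 ^ 2 = c ^ 2 := fun ij hij => by
      obtain ⟨hmem, hzero⟩ := Finset.mem_filter.mp hij
      rw [Matrix.sub_apply, hA _ _ (Finset.mem_offDiag.mp hmem).2.2, hzero, sub_zero]
    calc (Z.card : ℝ) * c ^ 2 = ∑ ij ∈ Z, (A - At) ij.1 ij.2 ^ 2 := by
          rw [Finset.sum_congr rfl hentry, Finset.sum_const, nsmul_eq_mul]
      _ ≤ ∑ ij : ι × ι, (A - At) ij.1 ij.2 ^ 2 :=
          Finset.sum_le_univ_sum_of_nonneg fun _ => sq_nonneg _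
      _ = ∑ i, ∑ j, (A - At) i j ^ 2 := Fintype.sum_prod_type' fun i j => (A - At) i j ^ 2
  exact (mul_le_mul_of_nonneg_right hZ (sq_nonneg c)).trans hZsum

end Sparsity

theorem stmt12_general (p q : ℝ) (hp : 1 ≤ p) (hpq : p < q) (hq : q ≤ 2)
    (n : ℕ) (hn : 2 ≤ n)
    (J : Matrix (Fin n) (Fin n) ℝ) (hJ : ∀ i j, J i j = 1)
    (A : Matrix (Fin n) (Fin n) ℝ) (hA : A = 1 + (n : ℝ) ^ (1 / q - 1) • J)
    (ε : ℝ) (hε1 : (n : ℝ) ^ (-(1 / p - 1 / q)) < ε) :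
    schattenF p (A - 1) < 2 * ε * schattenF p A ∧
    nnz (1 : Matrix (Fin n) (Fin n) ℝ) = n ∧
    ∀ At : Matrix (Fin n) (Fin n) ℝ,
      schattenF q (A - At) ≤ 0.1 * schattenF q A →
      0.96 * (n : ℝ) ^ 2 - n ≤ (nnz At : ℝ) := by
  have : Nonempty (Fin n) := ⟨⟨0, by omega⟩⟩
  have hn0 : (0 : ℝ) < n := by positivity
  have hq0 : 0 < q := by linarith
  set c := (n : ℝ) ^ (1 / q - 1) with hc_def
  have hc : 0 < c := by positivity
  have hcn : c * n = (n : ℝ) ^ (1 / q) := by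
    rw [hc_def, Real.rpow_sub_one hn0.ne', div_mul_cancel₀ _ hn0.ne']
  refine ⟨?_, nnz_one.trans (Fintype.card_fin n), fun At hAt => ?_⟩
  · have hAp : (n : ℝ) ^ (1 / p) ≤ schattenF p A := by
      simpa [hA] using card_rpow_le_schattenF_one_add_smul hJ (by linarith : 0 < p) hc.le
    have hε : (n : ℝ) ^ (1 / q) < ε * (n : ℝ) ^ (1 / p) := by
      have : (n : ℝ) ^ (-(1 / p - 1 / q)) * (n : ℝ) ^ (1 / p) = (n : ℝ) ^ (1 / q) := by
        rw [← Real.rpow_add hn0]; ring_nf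
      rw [← this]
      exact mul_lt_mul_of_pos_right hε1 (by positivity)
    have hε0 : 0 < ε := lt_trans (by positivity) hε1
    have hApos : 0 < schattenF p A := lt_of_lt_of_le (by positivity) hAp
    calc schattenF p (A - 1) = (n : ℝ) ^ (1 / q) := by
          rw [hA, add_sub_cancel_left, schattenF_smul_allOnes hJ (by linarith) hc.le,
            Fintype.card_fin, hcn]
      _ < ε * (n : ℝ) ^ (1 / p) := hε
      _ ≤ ε * schattenF p A := by gcongr
      _ < 2 * ε * schattenF p A := by nlinarith [mul_pos hε0 hApos]
  · have hAq : schattenF q A ≤ 2 * (n : ℝ) ^ (1 / q) := by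
      have hdom : (n : ℝ) ≤ (c * n) ^ q := by
        rw [hcn, ← Real.rpow_mul hn0.le, one_div_mul_cancel hq0.ne', Real.rpow_one]
      simpa [hA, hcn] using schattenF_one_add_smul_le hJ (by linarith) hc.le (by simpa using hdom)
    have hoff : ∀ i j, i ≠ j → A i j = c := fun i j hij => by
      simp [hA, one_apply_ne hij, hJ, c]
    have hfrob : ∑ i, ∑ j, (A - At) i j ^ 2 ≤ (0.2 * (c * n)) ^ 2 := by
      refine (sum_sq_le_schattenF_sq hq0 hq _).trans (pow_le_pow_left₀ (schattenF_nonneg _ _) ?_ 2)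
      rw [hcn]
      linarith
    have hcount := (card_offDiag_sub_nnz_mul_sq_le hoff At).trans hfrob
    rw [Fintype.card_fin] at hcount
    have : ((n : ℝ) ^ 2 - n - nnz At) * c ^ 2 ≤ (0.04 * n ^ 2) * c ^ 2 := by linarith
    linarith [le_of_mul_le_mul_right this (by positivity)]

/-- hard instance for `1 ≤ p < q ≤ 2`: `A = I + n^{1/q-1}·J_n`. -/
theorem stmt12 (p q : ℝ) (hp : 1 ≤ p) (hpq : p < q) (hq : q ≤ 2)
    (n : ℕ) (hn : 2 ≤ n)
    (J : Matrix (Fin n) (Fin n) ℝ) (hJ : ∀ i j, J i j = 1)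
    (A : Matrix (Fin n) (Fin n) ℝ) (hA : A = 1 + (n : ℝ) ^ (1 / q - 1) • J)
    (ε : ℝ) (hε1 : (n : ℝ) ^ (-(1 / p - 1 / q)) < ε) (hε2 : ε < 1 / 2) :
    schattenF p (A - 1) < 2 * ε * schattenF p A ∧
    nnz (1 : Matrix (Fin n) (Fin n) ℝ) = n ∧
    ∀ At : Matrix (Fin n) (Fin n) ℝ,
      schattenF q (A - At) ≤ 0.1 * schattenF q A →
      0.96 * (n : ℝ) ^ 2 - n ≤ (nnz At : ℝ) :=
  stmt12_general p q hp hpq hq n hn J hJ A hA ε hε1
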